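/- arXiv:2507.21281 — 2 statements merged into one kernel-verified Lean document; each statement's English description precedes it below -/
import Mathlib

section
/- Let $A_{22}$ be a real $p \times p$ matrix, $A_{21}$ a real $p \times (n-p)$ matrix, and $D_2$ a real $p \times h$ matrix. Let $x_1 : \mathbb{R} \to \mathbb{R}^{n-p}$ and $g : \mathbb{R} \to \mathbb{R}^{h}$ be continuous, let $x_2 : \mathbb{R} \to \mathbb{R}^{p}$ be differentiable with $\dot{x}_2(\theta) = A_{22} x_2(\theta) + A_{21} x_1(\theta) + D_2 g(\theta)$ for all $\theta$, and let $\tau : \mathbb{R} \to [0, \infty)$ be differentiable. Define the time-varying-delay predictor $\hat{x}_2(t) := e^{A_{22}\tau(t)} x_2(t-\tau(t)) + \int_{t-\tau(t)}^{t} e^{A_{22}(t-\theta)} A_{21} x_1(\theta)\, d\theta$. Then $\hat{x}_2$ is differentiable and for every $t$, $\dot{\hat{x}}_2(t) = A_{21} x_1(t) + A_{22} \hat{x}_2(t) + (1 - \dot{\tau}(t))\, e^{A_{22}\tau(t)} D_2\, g(t - \tau(t))$. -/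
/-!
Conjugating by the flow, `x̂₂(t) = e^{A₂₂ t} (ζ(t - τ(t)) + ∫₀ᵗ e^{-A₂₂ θ} A₂₁ x₁(θ) dθ)` with
`ζ(s) = e^{-A₂₂ s} x₂(s) - ∫₀ˢ e^{-A₂₂ θ} A₂₁ x₁(θ) dθ`. By variation of constants the known
forcing `A₂₁ x₁` cancels in `ζ`, leaving `ζ'(s) = e^{-A₂₂ s} D₂ g(s)`; the chain rule through
`t - τ(t)` and the product rule for `e^{A₂₂ t}` then give the predictor dynamics.
-/

open MeasureTheory Matrix

namespace Matrix

variable {𝕜 : Type*} [RCLike 𝕜] {m n : Type*} [Fintype m] [Fintype n]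

variable (𝕜 m n) in
noncomputable def mulVecL : Matrix m n 𝕜 →L[𝕜] (n → 𝕜) →L[𝕜] (m → 𝕜) :=
  LinearMap.toContinuousLinearMap
    (LinearMap.toContinuousLinearMap.toLinearMap ∘ₗ
      LinearMap.mk₂ 𝕜 mulVec add_mulVec smul_mulVec mulVec_add fun c M v => mulVec_smul M c v)

theorem mulVec_intervalIntegral (M : Matrix m n 𝕜) {f : ℝ → n → 𝕜} {a b : ℝ}
    (hf : IntervalIntegrable f volume a b) :
    M *ᵥ ∫ x in a..b, f x = ∫ x in a..b, M *ᵥ f x :=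
  ((mulVecL 𝕜 m n M).intervalIntegral_comp_comm hf).symm

variable [DecidableEq m]

-- The operator norm is only a device for the calculus of `exp`; the statements do not
-- depend on it.
open scoped Norms.Operator in
theorem hasDerivAt_exp_smul_mulVec (A : Matrix m m 𝕜) {v : 𝕜 → m → 𝕜} {v' : m → 𝕜} {t : 𝕜}
    (hv : HasDerivAt v v' t) :
    HasDerivAt (fun r => NormedSpace.exp (r • A) *ᵥ v r)
      (A *ᵥ (NormedSpace.exp (t • A) *ᵥ v t) + NormedSpace.exp (t • A) *ᵥ v') t := by
  rw [mulVec_mulVec, add_comm]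
  exact (mulVecL 𝕜 m m).hasDerivAt_of_bilinear (fun _ => hasDerivAt_exp_smul_const' A t) fun _ => hv

open scoped Norms.Operator in
theorem continuous_exp_smul (A : Matrix m m 𝕜) : Continuous fun r : 𝕜 => NormedSpace.exp (r • A) :=
  (differentiable_exp_smul_const 𝕜 A).continuous

theorem exp_smul_mulVec_exp_smul_mulVec (A : Matrix m m 𝕜) (r s : 𝕜) (v : m → 𝕜) :
    NormedSpace.exp (r • A) *ᵥ (NormedSpace.exp (s • A) *ᵥ v)
      = NormedSpace.exp ((r + s) • A) *ᵥ v := by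
  rw [mulVec_mulVec, add_smul,
    exp_add_of_commute _ _ ((Commute.refl A).smul_left r |>.smul_right s)]

theorem exp_smul_mulVec_mulVec_comm (A : Matrix m m 𝕜) (r : 𝕜) (v : m → 𝕜) :
    NormedSpace.exp (r • A) *ᵥ (A *ᵥ v) = A *ᵥ (NormedSpace.exp (r • A) *ᵥ v) := by
  rw [mulVec_mulVec, mulVec_mulVec, ((Commute.refl A).smul_left r).exp_left.eq]

theorem hasDerivAt_exp_neg_smul_mulVec (A : Matrix m m 𝕜) {x : 𝕜 → m → 𝕜} {f : m → 𝕜} {t : 𝕜}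
    (hx : HasDerivAt x (A *ᵥ x t + f) t) :
    HasDerivAt (fun s => NormedSpace.exp ((-s) • A) *ᵥ x s)
      (NormedSpace.exp ((-t) • A) *ᵥ f) t := by
  simp_rw [neg_smul, ← smul_neg]
  refine (hasDerivAt_exp_smul_mulVec (-A) hx).congr_deriv ?_
  rw [smul_neg, ← neg_smul, mulVec_add, exp_smul_mulVec_mulVec_comm, neg_mulVec]
  abel

theorem intervalIntegral_exp_sub_smul_mulVec (A : Matrix m m ℝ) {u : ℝ → m → ℝ} (hu : Continuous u)
    (r a b : ℝ) :
    ∫ θ in a..b, NormedSpace.exp ((r - θ) • A) *ᵥ u θ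
      = NormedSpace.exp (r • A) *ᵥ ∫ θ in a..b, NormedSpace.exp ((-θ) • A) *ᵥ u θ := by
  have hw : Continuous fun θ => NormedSpace.exp ((-θ) • A) *ᵥ u θ :=
    ((continuous_exp_smul A).comp continuous_neg).matrix_mulVec hu
  rw [mulVec_intervalIntegral _ (hw.intervalIntegrable a b)]
  refine intervalIntegral.integral_congr fun θ _ => ?_
  simp only [exp_smul_mulVec_exp_smul_mulVec, sub_eq_add_neg]

theorem hasDerivAt_exp_neg_smul_mulVec_sub_integral (A : Matrix m m ℝ) {x u d : ℝ → m → ℝ}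
    (hu : Continuous u) (hx : ∀ s, HasDerivAt x (A *ᵥ x s + u s + d s) s) (t : ℝ) :
    HasDerivAt (fun s => NormedSpace.exp ((-s) • A) *ᵥ x s
        - ∫ θ in (0 : ℝ)..s, NormedSpace.exp ((-θ) • A) *ᵥ u θ)
      (NormedSpace.exp ((-t) • A) *ᵥ d t) t := by
  have hw : Continuous fun θ => NormedSpace.exp ((-θ) • A) *ᵥ u θ :=
    ((continuous_exp_smul A).comp continuous_neg).matrix_mulVec hu
  have hxt : HasDerivAt x (A *ᵥ x t + (u t + d t)) t := by rw [← add_assoc]; exact hx t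
  refine ((hasDerivAt_exp_neg_smul_mulVec A hxt).sub
    (hw.integral_hasStrictDerivAt 0 t).hasDerivAt).congr_deriv ?_
  rw [mulVec_add]
  abel

end Matrix

theorem predictor_dynamics_general {n p h : ℕ}
    (A22 : Matrix (Fin p) (Fin p) ℝ) (A21 : Matrix (Fin p) (Fin (n - p)) ℝ)
    (D2 : Matrix (Fin p) (Fin h) ℝ)
    (x1 : ℝ → Fin (n - p) → ℝ) (g : ℝ → Fin h → ℝ)
    (hx1 : Continuous x1)
    (x2 : ℝ → Fin p → ℝ)
    (hx2 : ∀ θ : ℝ, HasDerivAt x2 (A22 *ᵥ x2 θ + A21 *ᵥ x1 θ + D2 *ᵥ g θ) θ)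
    (τ τ' : ℝ → ℝ) (hτ : ∀ t, HasDerivAt τ (τ' t) t) :
    ∀ t : ℝ, HasDerivAt
      (fun r => NormedSpace.exp (τ r • A22) *ᵥ x2 (r - τ r)
        + ∫ θ in (r - τ r)..r, NormedSpace.exp ((r - θ) • A22) *ᵥ (A21 *ᵥ x1 θ))
      (A21 *ᵥ x1 t
        + A22 *ᵥ (NormedSpace.exp (τ t • A22) *ᵥ x2 (t - τ t)
            + ∫ θ in (t - τ t)..t, NormedSpace.exp ((t - θ) • A22) *ᵥ (A21 *ᵥ x1 θ))
        + (1 - τ' t) • (NormedSpace.exp (τ t • A22) *ᵥ (D2 *ᵥ g (t - τ t)))) t := by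
  intro t
  have hu : Continuous fun θ => A21 *ᵥ x1 θ := continuous_const.matrix_mulVec hx1
  set w := fun θ : ℝ => NormedSpace.exp ((-θ) • A22) *ᵥ (A21 *ᵥ x1 θ)
  set ζ := fun s : ℝ => NormedSpace.exp ((-s) • A22) *ᵥ x2 s - ∫ θ in (0 : ℝ)..s, w θ
  have hw : Continuous w := ((continuous_exp_smul A22).comp continuous_neg).matrix_mulVec hu
  have hrepr : ∀ r, NormedSpace.exp (τ r • A22) *ᵥ x2 (r - τ r)
        + ∫ θ in (r - τ r)..r, NormedSpace.exp ((r - θ) • A22) *ᵥ (A21 *ᵥ x1 θ)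
      = NormedSpace.exp (r • A22) *ᵥ (ζ (r - τ r) + ∫ θ in (0 : ℝ)..r, w θ) := by
    intro r
    rw [intervalIntegral_exp_sub_smul_mulVec A22 hu, ← intervalIntegral.integral_interval_sub_left
      (hw.intervalIntegrable 0 r) (hw.intervalIntegrable 0 (r - τ r))]
    simp only [ζ, mulVec_add, mulVec_sub, exp_smul_mulVec_exp_smul_mulVec, neg_sub, add_sub_cancel]
    abel
  have hζ : HasDerivAt (fun r => ζ (r - τ r))
      ((1 - τ' t) • (NormedSpace.exp ((-(t - τ t)) • A22) *ᵥ (D2 *ᵥ g (t - τ t)))) t :=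
    (hasDerivAt_exp_neg_smul_mulVec_sub_integral A22 (d := fun θ => D2 *ᵥ g θ) hu hx2 _).scomp t
      ((hasDerivAt_id t).sub (hτ t))
  have hconj :=
    hasDerivAt_exp_smul_mulVec A22 (hζ.add (hw.integral_hasStrictDerivAt 0 t).hasDerivAt)
  refine (hconj.congr_deriv ?_).congr_of_eventuallyEq (Filter.Eventually.of_forall hrepr)
  rw [hrepr t]
  simp only [w, Pi.add_apply, mulVec_add, mulVec_smul, exp_smul_mulVec_exp_smul_mulVec, neg_sub,
    add_sub_cancel, add_neg_cancel, zero_smul, NormedSpace.exp_zero, one_mulVec]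
  abel

/-- **Dynamics of the time-varying-delay predictor.**
With `x₂` solving `ẋ₂(θ) = A₂₂ x₂(θ) + A₂₁ x₁(θ) + D₂ g(θ)` and `τ` a differentiable
delay, the predictor `x̂₂(t) = e^{A₂₂ τ(t)} x₂(t-τ(t)) + ∫_{t-τ(t)}^t e^{A₂₂(t-θ)} A₂₁ x₁(θ) dθ`
is differentiable with
`ẋ̂₂(t) = A₂₁ x₁(t) + A₂₂ x̂₂(t) + (1 - τ̇(t)) e^{A₂₂ τ(t)} D₂ g(t - τ(t))`. -/
theorem predictor_dynamics {n p h : ℕ}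
    (A22 : Matrix (Fin p) (Fin p) ℝ) (A21 : Matrix (Fin p) (Fin (n - p)) ℝ)
    (D2 : Matrix (Fin p) (Fin h) ℝ)
    (x1 : ℝ → Fin (n - p) → ℝ) (g : ℝ → Fin h → ℝ)
    (hx1 : Continuous x1) (hg : Continuous g)
    (x2 : ℝ → Fin p → ℝ)
    (hx2 : ∀ θ : ℝ, HasDerivAt x2 (A22 *ᵥ x2 θ + A21 *ᵥ x1 θ + D2 *ᵥ g θ) θ)
    (τ τ' : ℝ → ℝ) (hτ : ∀ t, HasDerivAt τ (τ' t) t) (hτ0 : ∀ t, 0 ≤ τ t) :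
    ∀ t : ℝ, HasDerivAt
      (fun r => NormedSpace.exp (τ r • A22) *ᵥ x2 (r - τ r)
        + ∫ θ in (r - τ r)..r, NormedSpace.exp ((r - θ) • A22) *ᵥ (A21 *ᵥ x1 θ))
      (A21 *ᵥ x1 t
        + A22 *ᵥ (NormedSpace.exp (τ t • A22) *ᵥ x2 (t - τ t)
            + ∫ θ in (t - τ t)..t, NormedSpace.exp ((t - θ) • A22) *ᵥ (A21 *ᵥ x1 θ))
        + (1 - τ' t) • (NormedSpace.exp (τ t • A22) *ᵥ (D2 *ᵥ g (t - τ t)))) t :=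
  predictor_dynamics_general A22 A21 D2 x1 g hx1 x2 hx2 τ τ' hτ
end

section
/- Let $m \ge 1$, $\rho > \eta > 0$, $t_0 \in \mathbb{R}$, and define $\mathrm{sign} : \mathbb{R}^m \to \mathbb{R}^m$ componentwise with $\mathrm{sign}(0)=0$. Let $s : [t_0, \infty) \to \mathbb{R}^m$ be continuous and let $w : [t_0, \infty) \to \mathbb{R}^m$ satisfy $\|w(t)\|_2 \le \rho - \eta$ for all $t$. Suppose that at every $t \ge t_0$ with $s(t) \ne 0$, the function $s$ is differentiable at $t$ with $\dot{s}(t) = w(t) - \rho\, \mathrm{sign}(s(t))$. Then there exists $T \in [t_0,\ t_0 + \|s(t_0)\|_2/\eta]$ such that $s(T) = 0$; i.e., the sliding surface $s = 0$ is reached in finite time, within time at most $\|s(t_0)\|_2/\eta$. -/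
/-!
Along a trajectory with `s ≠ 0` the Euclidean norm `‖s‖` decreases at rate at least `η`:
`d/dt ‖s‖ = ⟪s, ṡ⟫ / ‖s‖` and `⟪s, w - ρ sign s⟫ ≤ (ρ - η)‖s‖ - ρ‖s‖₁ ≤ -η‖s‖`, because the
`ℓ²` norm is bounded by the `ℓ¹` norm `⟪s, sign s⟫`. If `s` did not vanish on
`[t₀, t₀ + ‖s t₀‖ / η]`, its norm would therefore be `≤ 0` at the right endpoint.
-/

/-- The componentwise sign vector: `(sign s)ᵢ = 1, -1, 0` according to
`sᵢ > 0`, `sᵢ < 0`, `sᵢ = 0` (in particular `sign 0 = 0`). -/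
noncomputable def signVec {m : ℕ} (s : EuclideanSpace ℝ (Fin m)) : EuclideanSpace ℝ (Fin m) :=
  WithLp.toLp 2 (fun i => Real.sign (s i))

open Set
open scoped RealInnerProductSpace

theorem Real.sign_mul_self (r : ℝ) : Real.sign r * r = |r| := by
  rcases lt_trichotomy r 0 with h | rfl | h
  · rw [Real.sign_of_neg h, abs_of_neg h, neg_one_mul]
  · simp
  · rw [Real.sign_of_pos h, abs_of_pos h, one_mul]

theorem EuclideanSpace.norm_le_sum_abs {ι : Type*} [Fintype ι] (x : EuclideanSpace ℝ ι) :
    ‖x‖ ≤ ∑ i, |x i| := by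
  have hsq : ∑ i, ‖x i‖ ^ 2 ≤ (∑ i, |x i|) ^ 2 := by
    simpa only [Real.norm_eq_abs, sq_abs] using
      Finset.sum_sq_le_sq_sum_of_nonneg fun i _ => abs_nonneg (x i)
  calc ‖x‖ = √(∑ i, ‖x i‖ ^ 2) := EuclideanSpace.norm_eq x
    _ ≤ √((∑ i, |x i|) ^ 2) := Real.sqrt_le_sqrt hsq
    _ = ∑ i, |x i| := Real.sqrt_sq (Finset.sum_nonneg fun i _ => abs_nonneg _)

theorem inner_signVec_eq_sum_abs {m : ℕ} (x : EuclideanSpace ℝ (Fin m)) :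
    ⟪x, signVec x⟫ = ∑ i, |x i| := by
  simp only [PiLp.inner_apply, signVec, RCLike.inner_apply, conj_trivial]
  exact Finset.sum_congr rfl fun i _ => Real.sign_mul_self (x i)

theorem norm_le_inner_signVec {m : ℕ} (x : EuclideanSpace ℝ (Fin m)) :
    ‖x‖ ≤ ⟪x, signVec x⟫ :=
  (inner_signVec_eq_sum_abs x).symm ▸ EuclideanSpace.norm_le_sum_abs x

theorem inner_sub_smul_signVec_le {m : ℕ} {ρ η : ℝ} (hρ : 0 ≤ ρ)
    (x : EuclideanSpace ℝ (Fin m)) {w : EuclideanSpace ℝ (Fin m)} (hw : ‖w‖ ≤ ρ - η) :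
    ⟪x, w - ρ • signVec x⟫ ≤ -η * ‖x‖ :=
  calc ⟪x, w - ρ • signVec x⟫ = ⟪x, w⟫ - ρ * ⟪x, signVec x⟫ := by
        rw [inner_sub_right, real_inner_smul_right]
    _ ≤ ‖x‖ * (ρ - η) - ρ * ‖x‖ :=
        sub_le_sub ((real_inner_le_norm x w).trans (mul_le_mul_of_nonneg_left hw (norm_nonneg x)))
          (mul_le_mul_of_nonneg_left (norm_le_inner_signVec x) hρ)
    _ = -η * ‖x‖ := by ring

section NormDecay

variable {F : Type*} [NormedAddCommGroup F] [InnerProductSpace ℝ F]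

theorem HasDerivAt.norm {f : ℝ → F} {f' : F} {x : ℝ} (hf : HasDerivAt f f' x) (h0 : f x ≠ 0) :
    HasDerivAt (‖f ·‖) (⟪f x, f'⟫ / ‖f x‖) x := by
  have h := hf.norm_sq.sqrt (by positivity)
  simp only [Real.sqrt_sq (norm_nonneg _)] at h
  convert h using 1
  field_simp

theorem norm_le_sub_mul_of_inner_deriv_le {s s' : ℝ → F} {a b η : ℝ} (hab : a ≤ b)
    (hs : ContinuousOn s (Icc a b)) (hne : ∀ t ∈ Ioo a b, s t ≠ 0)
    (hderiv : ∀ t ∈ Ioo a b, HasDerivAt s (s' t) t)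
    (hdecay : ∀ t ∈ Ioo a b, ⟪s t, s' t⟫ ≤ -η * ‖s t‖) :
    ‖s b‖ ≤ ‖s a‖ - η * (b - a) := by
  have hanti : AntitoneOn (fun t => ‖s t‖ + η * t) (Icc a b) := by
    refine antitoneOn_of_hasDerivWithinAt_nonpos (convex_Icc a b)
      (f' := fun t => ⟪s t, s' t⟫ / ‖s t‖ + η)
      (hs.norm.add (continuousOn_const.mul continuousOn_id)) (fun t ht => ?_) (fun t ht => ?_)
    all_goals rw [interior_Icc] at ht
    · have h := ((hderiv t ht).norm (hne t ht)).add ((hasDerivAt_id' t).const_mul η)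
      rw [mul_one] at h
      exact h.hasDerivWithinAt
    · have hpos : 0 < ‖s t‖ := norm_pos_iff.mpr (hne t ht)
      have hrate := (div_le_iff₀ hpos).mpr (hdecay t ht)
      linarith
  have hmono : ‖s b‖ + η * b ≤ ‖s a‖ + η * a := hanti ⟨le_rfl, hab⟩ ⟨hab, le_rfl⟩ hab
  linarith

end NormDecay

theorem sliding_surface_reached_general {m : ℕ}
    (ρ η : ℝ) (hη : 0 < η) (hρη : η < ρ) (t₀ : ℝ)
    (s w : ℝ → EuclideanSpace ℝ (Fin m))
    (hs : ContinuousOn s (Set.Ici t₀))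
    (hw : ∀ t, t₀ ≤ t → ‖w t‖ ≤ ρ - η)
    (hdyn : ∀ t, t₀ ≤ t → s t ≠ 0 → HasDerivAt s (w t - ρ • signVec (s t)) t) :
    ∃ T ∈ Set.Icc t₀ (t₀ + ‖s t₀‖ / η), s T = 0 := by
  by_contra! hne
  set T := t₀ + ‖s t₀‖ / η
  have hT : t₀ ≤ T := le_add_of_nonneg_right (by positivity)
  have hne_Ioo : ∀ t ∈ Ioo t₀ T, s t ≠ 0 := fun t ht => hne t (Ioo_subset_Icc_self ht)
  have hdecay := norm_le_sub_mul_of_inner_deriv_le hT (hs.mono Icc_subset_Ici_self) hne_Ioo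
    (fun t ht => hdyn t ht.1.le (hne_Ioo t ht))
    (fun t ht => inner_sub_smul_signVec_le (by linarith) (s t) (hw t ht.1.le))
  have hreach : η * (T - t₀) = ‖s t₀‖ := by
    rw [add_sub_cancel_left, mul_div_cancel₀ _ hη.ne']
  exact hne T ⟨hT, le_rfl⟩ (norm_le_zero_iff.mp (by linarith))

/-- **Finite-time reaching of the sliding surface.**
If `s` is continuous on `[t₀, ∞)`, the perturbation satisfies `‖w(t)‖ ≤ ρ - η`, and at every
`t ≥ t₀` with `s(t) ≠ 0` the sliding dynamics `ṡ(t) = w(t) - ρ sign(s(t))` hold, then the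
surface `s = 0` is reached at some time `T ∈ [t₀, t₀ + ‖s(t₀)‖/η]`. -/
theorem sliding_surface_reached {m : ℕ} (hm : 1 ≤ m)
    (ρ η : ℝ) (hη : 0 < η) (hρη : η < ρ) (t₀ : ℝ)
    (s w : ℝ → EuclideanSpace ℝ (Fin m))
    (hs : ContinuousOn s (Set.Ici t₀))
    (hw : ∀ t, t₀ ≤ t → ‖w t‖ ≤ ρ - η)
    (hdyn : ∀ t, t₀ ≤ t → s t ≠ 0 → HasDerivAt s (w t - ρ • signVec (s t)) t) :
    ∃ T ∈ Set.Icc t₀ (t₀ + ‖s t₀‖ / η), s T = 0 :=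
  sliding_surface_reached_general ρ η hη hρη t₀ s w hs hw hdyn
end
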